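/- Let k ≥ 3 and r ≥ 1 be integers. If λ ∈ ℝ is a root of R^k_{r+1}, then λ is an eigenvalue of the adjacency matrix of \widehat{X_r^k}, and the λ-eigenspace of A(\widehat{X_r^k}) has dimension at least k − 1. -/
import Mathlib


open Polynomial

/-- Vertices of the rooted tree of depth `r` in which each vertex at depth `i < r`
has `b i` children: a vertex is a word assigning to each position `i < m ≤ r`
a letter in `Fin (b i)`; the empty word (`m = 0`) is the root, and the depth of a
vertex is its length `m`. -/
abbrev BVertex (b : ℕ → ℕ) (r : ℕ) := Σ m : Fin (r + 1), (i : Fin (m : ℕ)) → Fin (b i)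

/-- `y` is a child of `x`: the word `y` extends the word `x` by one letter. -/
def BExt {b : ℕ → ℕ} {r : ℕ} (x y : BVertex b r) : Prop :=
  ∃ h : (y.1 : ℕ) = (x.1 : ℕ) + 1,
    ∀ i : Fin (x.1 : ℕ), y.2 ⟨(i : ℕ), by have := i.isLt; omega⟩ = x.2 i

/-- Adjacency in the rooted tree: the parent/child relation. -/
def BAdj {b : ℕ → ℕ} {r : ℕ} (x y : BVertex b r) : Prop := BExt x y ∨ BExt y x

open Classical in
/-- Adjacency matrix of the rooted tree with branching sequence `b` and depth `r`. -/
noncomputable def BAdjMatrix (b : ℕ → ℕ) (r : ℕ) : Matrix (BVertex b r) (BVertex b r) ℝ :=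
  fun x y => if BAdj x y then 1 else 0

/-- `lam` is an eigenvalue of the adjacency matrix of the tree. -/
def IsAdjEigenvalue (b : ℕ → ℕ) (r : ℕ) (lam : ℝ) : Prop :=
  ∃ v : BVertex b r → ℝ, v ≠ 0 ∧ (BAdjMatrix b r).mulVec v = lam • v

/-- Dimension of the `lam`-eigenspace of the adjacency matrix of the tree. -/
noncomputable def adjEigDim (b : ℕ → ℕ) (r : ℕ) (lam : ℝ) : ℕ :=
  Module.finrank ℝ
    (LinearMap.ker ((BAdjMatrix b r).mulVecLin - lam • LinearMap.id))

/-- Branching sequence of the tree `\widehat{X_r^k}`: the root has `k` children and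
every other non-leaf vertex has `k − 1` children. -/
def hatB (k : ℕ) : ℕ → ℕ := fun i => if i = 0 then k else k - 1

/-- The polynomials `R^k_n`: `R^k_0 = 0`, `R^k_1 = 1`,
`R^k_n = x·R^k_{n-1} − (k−1)·R^k_{n-2}`. -/
noncomputable def Rpoly (k : ℕ) : ℕ → Polynomial ℝ
  | 0 => 0
  | 1 => 1
  | n + 2 => X * Rpoly k (n + 1) - C ((k : ℝ) - 1) * Rpoly k n

/-- The polynomials `Q^k_n = x·R^k_n − k·R^k_{n-1}`. -/
noncomputable def Qpoly (k : ℕ) (n : ℕ) : Polynomial ℝ :=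
  X * Rpoly k n - C (k : ℝ) * Rpoly k (n - 1)



namespace HatProof

variable {b : ℕ → ℕ} {r : ℕ}

lemma bvertex_ext {x y : BVertex b r} (h1 : (x.1 : ℕ) = (y.1 : ℕ))
    (h2 : ∀ i : Fin (x.1 : ℕ), x.2 i = y.2 ⟨(i : ℕ), by have := i.isLt; omega⟩) : x = y := by
  obtain ⟨⟨m, hm⟩, f⟩ := x
  obtain ⟨⟨m', hm'⟩, f'⟩ := y
  simp only [Fin.val_mk] at h1
  subst h1
  have : f = f' := by
    funext i
    exact h2 i
  subst this
  rfl

def bparent (x : BVertex b r) (h : 0 < (x.1 : ℕ)) : BVertex b r :=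
  ⟨⟨(x.1 : ℕ) - 1, by have := x.1.isLt; omega⟩,
    fun i => x.2 ⟨(i : ℕ), by have : (i : ℕ) < (x.1 : ℕ) - 1 := i.isLt; omega⟩⟩

def bchild (x : BVertex b r) (h : (x.1 : ℕ) < r) (c : Fin (b ((x.1 : ℕ)))) : BVertex b r :=
  ⟨⟨(x.1 : ℕ) + 1, by omega⟩,
    Fin.snoc (α := fun i : Fin ((x.1 : ℕ) + 1) => Fin (b (i : ℕ))) x.2 c⟩

lemma bext_bparent (x : BVertex b r) (h : 0 < (x.1 : ℕ)) : BExt (bparent x h) x :=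
  ⟨by simp only [bparent]; omega, fun _ => rfl⟩

lemma eq_bparent_of_bext {x y : BVertex b r} (he : BExt y x) :
    ∃ h : 0 < (x.1 : ℕ), y = bparent x h := by
  obtain ⟨h1, h2⟩ := he
  refine ⟨by omega, ?_⟩
  refine bvertex_ext (x := y) (y := bparent x (by omega)) ?_ ?_
  · show (y.1 : ℕ) = (x.1 : ℕ) - 1
    omega
  · intro i
    exact (h2 i).symm

lemma bext_bchild (x : BVertex b r) (h : (x.1 : ℕ) < r) (c : Fin (b (x.1 : ℕ))) :
    BExt x (bchild x h c) := by
  refine ⟨rfl, fun i => ?_⟩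
  show Fin.snoc (α := fun i : Fin ((x.1 : ℕ) + 1) => Fin (b (i : ℕ))) x.2 c i.castSucc = x.2 i
  rw [Fin.snoc_castSucc]

lemma bchild_injective (x : BVertex b r) (h : (x.1 : ℕ) < r) :
    Function.Injective (bchild x h) := by
  intro c c' he
  have h2 : HEq (bchild x h c).2 (bchild x h c').2 := by rw [he]
  have h3 : (bchild x h c).2 = (bchild x h c').2 := eq_of_heq h2
  have h4 := congrFun h3 (Fin.last ((x.1 : ℕ)))
  have e1 : (bchild x h c).2 (Fin.last ((x.1 : ℕ))) = c := Fin.snoc_last (α := fun i : Fin ((x.1 : ℕ) + 1) => Fin (b (i : ℕ))) (p := x.2) (x := c)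
  have e2 : (bchild x h c').2 (Fin.last ((x.1 : ℕ))) = c' :=
    Fin.snoc_last (α := fun i : Fin ((x.1 : ℕ) + 1) => Fin (b (i : ℕ))) (p := x.2) (x := c')
  rw [e1, e2] at h4
  exact h4

lemma eq_bchild_of_bext {x y : BVertex b r} (h : (x.1 : ℕ) < r) (he : BExt x y) :
    ∃ c, y = bchild x h c := by
  obtain ⟨h1, h2⟩ := he
  refine ⟨y.2 ⟨(x.1 : ℕ), by omega⟩, ?_⟩
  refine bvertex_ext (x := y) (y := bchild x h _) ?_ ?_
  · show (y.1 : ℕ) = (x.1 : ℕ) + 1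
    omega
  · intro i
    by_cases hi : (i : ℕ) < (x.1 : ℕ)
    · have lhs : y.2 i = x.2 ⟨(i : ℕ), hi⟩ := h2 ⟨(i : ℕ), hi⟩
      rw [lhs]
      exact (Fin.snoc_castSucc (α := fun i : Fin ((x.1 : ℕ) + 1) => Fin (b (i : ℕ)))
        (i := ⟨(i : ℕ), hi⟩) (p := x.2) (x := y.2 ⟨(x.1 : ℕ), by omega⟩)).symm
    · have hie : (i : ℕ) = (x.1 : ℕ) := by have := i.isLt; omega
      have : i = ⟨(x.1 : ℕ), by omega⟩ := Fin.ext hie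
      rw [this]
      exact (Fin.snoc_last (α := fun i : Fin ((x.1 : ℕ) + 1) => Fin (b (i : ℕ)))
        (p := x.2) (x := y.2 ⟨(x.1 : ℕ), by omega⟩)).symm

end HatProof

namespace HatProof

variable {b : ℕ → ℕ} {r : ℕ}

open Finset in
lemma sum_adj (v : BVertex b r → ℝ) (x : BVertex b r) :
    ∑ y, BAdjMatrix b r x y * v y =
      (if h : 0 < (x.1 : ℕ) then v (bparent x h) else 0) +
      (if h : (x.1 : ℕ) < r then ∑ c : Fin (b ((x.1 : ℕ))), v (bchild x h c) else 0) := by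
  classical
  have key : ∀ y, BAdjMatrix b r x y * v y =
      (if BExt y x then v y else 0) + (if BExt x y then v y else 0) := by
    intro y
    by_cases h1 : BExt x y <;> by_cases h2 : BExt y x
    · exfalso
      have e1 := h1.1; have e2 := h2.1; omega
    · simp [BAdjMatrix, BAdj, h1, h2]
    · simp [BAdjMatrix, BAdj, h1, h2]
    · simp [BAdjMatrix, BAdj, h1, h2]
  simp only [key, Finset.sum_add_distrib]
  congr 1
  · by_cases h : 0 < (x.1 : ℕ)
    · rw [dif_pos h, Finset.sum_eq_single (bparent x h)]
      · rw [if_pos (bext_bparent x h)]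
      · intro y _ hy
        rw [if_neg]
        intro he
        obtain ⟨h', e⟩ := eq_bparent_of_bext he
        exact hy e
      · intro hx; exact absurd (Finset.mem_univ _) hx
    · rw [dif_neg h]
      apply Finset.sum_eq_zero
      intro y _
      rw [if_neg]
      intro he
      have := he.1; omega
  · by_cases h : (x.1 : ℕ) < r
    · rw [dif_pos h]
      have key2 : ∀ y : BVertex b r, (if BExt x y then v y else 0) =
          ∑ c : Fin (b ((x.1 : ℕ))), if y = bchild x h c then v y else 0 := by
        intro y
        by_cases he : BExt x y
        · obtain ⟨c₀, rfl⟩ := eq_bchild_of_bext h he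
          rw [if_pos he, Finset.sum_eq_single c₀]
          · rw [if_pos rfl]
          · intro c _ hc
            rw [if_neg]
            intro e
            exact hc (bchild_injective x h e.symm)
          · intro hc; exact absurd (Finset.mem_univ _) hc
        · rw [if_neg he]
          symm
          apply Finset.sum_eq_zero
          intro c _
          rw [if_neg]
          intro e
          exact he (e ▸ bext_bchild x h c)
      simp only [key2]
      rw [Finset.sum_comm]
      apply Finset.sum_congr rfl
      intro c _
      simp
    · rw [dif_neg h]
      apply Finset.sum_eq_zero
      intro y _
      rw [if_neg]
      intro he
      have h1 := he.1
      have h2 := y.1.isLt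
      have h3 := x.1.isLt
      omega

end HatProof

namespace HatProof

noncomputable def gfun (k r : ℕ) (lam : ℝ) (m : ℕ) : ℝ :=
  ((Rpoly k m).eval lam) * ((k : ℝ) - 1) ^ (r - m)

lemma Rpoly_succ_succ (k n : ℕ) :
    Rpoly k (n + 2) = X * Rpoly k (n + 1) - C ((k : ℝ) - 1) * Rpoly k n := rfl

lemma gfun_zero (k r : ℕ) (lam : ℝ) : gfun k r lam 0 = 0 := by
  simp [gfun, Rpoly]

lemma gfun_one (k r : ℕ) (lam : ℝ) : gfun k r lam 1 = ((k : ℝ) - 1) ^ (r - 1) := by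
  simp [gfun, Rpoly]

lemma rec_identity (k r : ℕ) (lam : ℝ) (m : ℕ) (h : m + 2 ≤ r) :
    gfun k r lam m + ((k : ℝ) - 1) * gfun k r lam (m + 2) = lam * gfun k r lam (m + 1) := by
  unfold gfun
  have e1 : r - m = (r - (m + 2)) + 2 := by omega
  have e2 : r - (m + 1) = (r - (m + 2)) + 1 := by omega
  rw [e1, e2, Rpoly_succ_succ]
  simp only [eval_sub, eval_mul, eval_X, eval_C]
  ring

lemma leaf_identity (k r : ℕ) (hr : 1 ≤ r) (lam : ℝ)
    (hroot : (Rpoly k (r + 1)).eval lam = 0) :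
    gfun k r lam (r - 1) = lam * gfun k r lam r := by
  obtain ⟨s, rfl⟩ : ∃ s, r = s + 1 := ⟨r - 1, by omega⟩
  have h1 : (Rpoly k (s + 2)).eval lam = 0 := hroot
  rw [Rpoly_succ_succ] at h1
  simp only [eval_sub, eval_mul, eval_X, eval_C] at h1
  unfold gfun
  have e1 : s + 1 - s = 1 := by omega
  have e2 : s + 1 - 1 = s := by omega
  have e3 : s + 1 - (s + 1) = 0 := by omega
  rw [e2, e1, e3]
  simp only [pow_one, pow_zero, mul_one]
  linarith [h1]

noncomputable def vvec (k r : ℕ) (lam : ℝ) (j : ℕ) (x : BVertex (hatB k) r) : ℝ :=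
  if h : 0 < ((x.1 : ℕ)) then
    (if ((x.2 ⟨0, h⟩ : ℕ)) = 0 then gfun k r lam (x.1 : ℕ)
     else if ((x.2 ⟨0, h⟩ : ℕ)) = j then -gfun k r lam (x.1 : ℕ) else 0)
  else 0

end HatProof

namespace HatProof

lemma vvec_apply (k r : ℕ) (lam : ℝ) (j : ℕ) (x : BVertex (hatB k) r) (h : 0 < ((x.1 : ℕ))) :
    vvec k r lam j x =
      (if ((x.2 ⟨0, h⟩ : ℕ)) = 0 then gfun k r lam ((x.1 : ℕ))
       else if ((x.2 ⟨0, h⟩ : ℕ)) = j then -gfun k r lam ((x.1 : ℕ)) else 0) :=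
  dif_pos h

lemma vvec_root (k r : ℕ) (lam : ℝ) (j : ℕ) (x : BVertex (hatB k) r) (h : ((x.1 : ℕ)) = 0) :
    vvec k r lam j x = 0 :=
  dif_neg (by omega)

variable {b : ℕ → ℕ} {r : ℕ}

lemma bchild_fst (x : BVertex b r) (h : (x.1 : ℕ) < r) (c : Fin (b (x.1 : ℕ))) :
    (((bchild x h c).1 : ℕ)) = (x.1 : ℕ) + 1 := rfl

lemma bparent_fst (x : BVertex b r) (h : 0 < (x.1 : ℕ)) :
    (((bparent x h).1 : ℕ)) = (x.1 : ℕ) - 1 := rfl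

lemma bchild_snd_val (x : BVertex b r) (h : (x.1 : ℕ) < r) (c : Fin (b (x.1 : ℕ)))
    (hp : 0 < (x.1 : ℕ)) (hp' : 0 < (((bchild x h c).1 : ℕ))) :
    (((bchild x h c).2 ⟨0, hp'⟩ : ℕ)) = ((x.2 ⟨0, hp⟩ : ℕ)) := by
  have : (bchild x h c).2 ⟨0, hp'⟩ =
      Fin.snoc (α := fun i : Fin ((x.1 : ℕ) + 1) => Fin (b (i : ℕ))) x.2 c
        (Fin.castSucc ⟨0, hp⟩) := rfl
  rw [this, Fin.snoc_castSucc]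

lemma bchild_snd_val_root (x : BVertex b r) (h : (x.1 : ℕ) < r) (c : Fin (b (x.1 : ℕ)))
    (hz : (x.1 : ℕ) = 0) (hp' : 0 < (((bchild x h c).1 : ℕ))) :
    (((bchild x h c).2 ⟨0, hp'⟩ : ℕ)) = (c : ℕ) := by
  obtain ⟨⟨m, hm⟩, f⟩ := x
  have hm0 : m = 0 := hz
  subst hm0
  have : (bchild ⟨⟨0, hm⟩, f⟩ h c).2 ⟨0, hp'⟩ =
      Fin.snoc (α := fun i : Fin (0 + 1) => Fin (b (i : ℕ))) f c (Fin.last 0) := rfl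
  rw [this, Fin.snoc_last]

lemma bparent_snd_val (x : BVertex b r) (h : 0 < (x.1 : ℕ)) (hp : 0 < (x.1 : ℕ) - 1)
    (hp' : 0 < (((bparent x h).1 : ℕ))) :
    (((bparent x h).2 ⟨0, hp'⟩ : ℕ)) = ((x.2 ⟨0, h⟩ : ℕ)) := rfl

lemma vvec_bparent (k r : ℕ) (lam : ℝ) (j : ℕ) (x : BVertex (hatB k) r) (h : 0 < (x.1 : ℕ)) :
    vvec k r lam j (bparent x h) =
      (if ((x.2 ⟨0, h⟩ : ℕ)) = 0 then gfun k r lam ((x.1 : ℕ) - 1)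
       else if ((x.2 ⟨0, h⟩ : ℕ)) = j then -gfun k r lam ((x.1 : ℕ) - 1) else 0) := by
  by_cases hp : 0 < (x.1 : ℕ) - 1
  · have hp' : 0 < (((bparent x h).1 : ℕ)) := hp
    rw [vvec_apply k r lam j _ hp', bparent_snd_val x h hp hp', bparent_fst]
  · have hz : (((bparent x h).1 : ℕ)) = 0 := by
      rw [bparent_fst]; omega
    rw [vvec_root k r lam j _ hz]
    have h0 : (x.1 : ℕ) - 1 = 0 := by omega
    rw [h0, gfun_zero]
    simp

lemma vvec_bchild (k r : ℕ) (lam : ℝ) (j : ℕ) (x : BVertex (hatB k) r) (h : (x.1 : ℕ) < r)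
    (c : Fin (hatB k (x.1 : ℕ))) (hp : 0 < (x.1 : ℕ)) :
    vvec k r lam j (bchild x h c) =
      (if ((x.2 ⟨0, hp⟩ : ℕ)) = 0 then gfun k r lam ((x.1 : ℕ) + 1)
       else if ((x.2 ⟨0, hp⟩ : ℕ)) = j then -gfun k r lam ((x.1 : ℕ) + 1) else 0) := by
  have hp' : 0 < (((bchild x h c).1 : ℕ)) := by rw [bchild_fst]; omega
  rw [vvec_apply k r lam j _ hp', bchild_snd_val x h c hp hp', bchild_fst]

lemma vvec_bchild_root (k r : ℕ) (lam : ℝ) (j : ℕ) (x : BVertex (hatB k) r) (h : (x.1 : ℕ) < r)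
    (c : Fin (hatB k (x.1 : ℕ))) (hz : (x.1 : ℕ) = 0) :
    vvec k r lam j (bchild x h c) =
      (if ((c : ℕ)) = 0 then gfun k r lam ((x.1 : ℕ) + 1)
       else if ((c : ℕ)) = j then -gfun k r lam ((x.1 : ℕ) + 1) else 0) := by
  have hp' : 0 < (((bchild x h c).1 : ℕ)) := by rw [bchild_fst]; omega
  rw [vvec_apply k r lam j _ hp', bchild_snd_val_root x h c hz hp', bchild_fst]

lemma fin_sum_ite (N a : ℕ) (v : ℝ) :
    (∑ c : Fin N, if (c : ℕ) = a then v else 0) = if a < N then v else 0 := by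
  by_cases ha : a < N
  · rw [if_pos ha, Finset.sum_eq_single (⟨a, ha⟩ : Fin N)]
    · rw [if_pos rfl]
    · intro c _ hc
      rw [if_neg]
      intro e
      exact hc (Fin.ext e)
    · intro hc; exact absurd (Finset.mem_univ _) hc
  · rw [if_neg ha]
    apply Finset.sum_eq_zero
    intro c _
    rw [if_neg]
    intro e
    have := c.isLt
    omega

end HatProof

namespace HatProof

lemma eigen_eq (k r : ℕ) (hk : 3 ≤ k) (hr : 1 ≤ r) (lam : ℝ)
    (hroot : (Rpoly k (r + 1)).eval lam = 0) (j : ℕ) (hj0 : j ≠ 0) (hjk : j < k) :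
    (BAdjMatrix (hatB k) r).mulVec (vvec k r lam j) = lam • (vvec k r lam j) := by
  classical
  funext x
  show (∑ y, BAdjMatrix (hatB k) r x y * vvec k r lam j y) = lam * vvec k r lam j x
  rw [sum_adj]
  by_cases hx0 : (x.1 : ℕ) = 0
  · -- root
    have hxr : (x.1 : ℕ) < r := by omega
    rw [dif_neg (by omega), dif_pos hxr, vvec_root k r lam j x hx0, mul_zero]
    have hcv : ∀ c : Fin (hatB k (x.1 : ℕ)), vvec k r lam j (bchild x hxr c) =
        (if (c : ℕ) = 0 then gfun k r lam 1 else 0) +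
        (if (c : ℕ) = j then -gfun k r lam 1 else 0) := by
      intro c
      rw [vvec_bchild_root k r lam j x hxr c hx0]
      have e1 : (x.1 : ℕ) + 1 = 1 := by omega
      rw [e1]
      by_cases h0 : (c : ℕ) = 0
      · have : ¬ ((c : ℕ) = j) := by omega
        simp only [h0, this, if_true, if_false, reduceIte]
        have : ¬ ((0:ℕ) = j) := fun h => hj0 h.symm
        simp [this]
      · by_cases hjj : (c : ℕ) = j
        · have : ¬ (j = 0) := by omega
          simp [h0, hjj, this]
        · simp [h0, hjj]
    rw [Finset.sum_congr rfl (fun c _ => hcv c), Finset.sum_add_distrib,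
      fin_sum_ite, fin_sum_ite]
    have hB : hatB k (x.1 : ℕ) = k := by rw [hx0]; simp [hatB]
    rw [if_pos (by omega : 0 < hatB k (x.1 : ℕ)), if_pos (by omega : j < hatB k (x.1 : ℕ))]
    ring
  · -- depth ≥ 1
    have hpos : 0 < (x.1 : ℕ) := by omega
    rw [dif_pos hpos, vvec_apply k r lam j x hpos, vvec_bparent k r lam j x hpos]
    set s : ℝ := (if ((x.2 ⟨0, hpos⟩ : ℕ)) = 0 then (1 : ℝ)
       else if ((x.2 ⟨0, hpos⟩ : ℕ)) = j then -1 else 0) with hs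
    have hsel : ∀ u : ℝ,
        (if ((x.2 ⟨0, hpos⟩ : ℕ)) = 0 then u
         else if ((x.2 ⟨0, hpos⟩ : ℕ)) = j then -u else 0) = s * u := by
      intro u
      by_cases h0 : ((x.2 ⟨0, hpos⟩ : ℕ)) = 0
      · simp [hs, h0]
      · by_cases hjj : ((x.2 ⟨0, hpos⟩ : ℕ)) = j
        · simp [hs, h0, hjj]
        · simp [hs, h0, hjj]
    rw [hsel, hsel]
    by_cases hxr : (x.1 : ℕ) < r
    · rw [dif_pos hxr]
      have hcv : ∀ c : Fin (hatB k (x.1 : ℕ)), vvec k r lam j (bchild x hxr c) =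
          s * gfun k r lam ((x.1 : ℕ) + 1) := by
        intro c
        rw [vvec_bchild k r lam j x hxr c hpos, hsel]
      rw [Finset.sum_congr rfl (fun c _ => hcv c), Finset.sum_const, Finset.card_univ,
        Fintype.card_fin, nsmul_eq_mul]
      have hB : hatB k (x.1 : ℕ) = k - 1 := by simp [hatB, hx0]
      rw [hB]
      have hcast : ((k - 1 : ℕ) : ℝ) = (k : ℝ) - 1 := by
        rw [Nat.cast_sub (by omega : 1 ≤ k)]; norm_num
      rw [hcast]
      have hrec := rec_identity k r lam ((x.1 : ℕ) - 1) (by omega)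
      have e1 : (x.1 : ℕ) - 1 + 2 = (x.1 : ℕ) + 1 := by omega
      have e2 : (x.1 : ℕ) - 1 + 1 = (x.1 : ℕ) := by omega
      rw [e1, e2] at hrec
      linear_combination s * hrec
    · rw [dif_neg hxr]
      have hxeq : (x.1 : ℕ) = r := by have := x.1.isLt; omega
      rw [hxeq]
      have hleaf := leaf_identity k r hr lam hroot
      linear_combination s * hleaf

end HatProof

namespace HatProof

def depth1 (k r a : ℕ) (ha : a < k) (hr : 1 ≤ r) : BVertex (hatB k) r :=
  ⟨⟨1, by omega⟩, fun i => ⟨a, by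
    have h0 : (i : ℕ) = 0 := by have : (i : ℕ) < 1 := i.isLt; omega
    rw [h0]; simpa [hatB] using ha⟩⟩

lemma vvec_depth1 (k r : ℕ) (lam : ℝ) (j a : ℕ) (ha : a < k) (hr : 1 ≤ r) :
    vvec k r lam j (depth1 k r a ha hr) =
      (if a = 0 then gfun k r lam 1 else if a = j then -gfun k r lam 1 else 0) := by
  rw [vvec_apply k r lam j (depth1 k r a ha hr) (h := Nat.one_pos)]
  rfl

lemma gfun_one_ne (k r : ℕ) (hk : 3 ≤ k) (lam : ℝ) : gfun k r lam 1 ≠ 0 := by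
  rw [gfun_one]
  apply pow_ne_zero
  have : (3 : ℝ) ≤ (k : ℝ) := by exact_mod_cast hk
  intro h
  nlinarith

end HatProof

open HatProof in
theorem hat_eigenspace_of_root_Rrplus1' (k r : ℕ) (hk : 3 ≤ k) (hr : 1 ≤ r) (lam : ℝ)
    (hroot : (Rpoly k (r + 1)).IsRoot lam) :
    IsAdjEigenvalue (hatB k) r lam ∧ k - 1 ≤ adjEigDim (hatB k) r lam := by
  classical
  have hroot' : (Rpoly k (r + 1)).eval lam = 0 := hroot
  constructor
  · refine ⟨vvec k r lam 1, ?_, eigen_eq k r hk hr lam hroot' 1 one_ne_zero (by omega)⟩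
    intro h0
    have h1 := congrFun h0 (depth1 k r 0 (by omega) hr)
    rw [vvec_depth1 k r lam 1 0 (by omega) hr] at h1
    simp only [if_pos rfl, Pi.zero_apply] at h1
    exact gfun_one_ne k r hk lam h1
  · -- dimension bound
    set T := ((BAdjMatrix (hatB k) r).mulVecLin - lam • LinearMap.id
        (R := ℝ) (M := BVertex (hatB k) r → ℝ)) with hT
    have hmem : ∀ j : ℕ, j ≠ 0 → j < k → vvec k r lam j ∈ LinearMap.ker T := by
      intro j hj0 hjk
      rw [LinearMap.mem_ker, hT, LinearMap.sub_apply, Matrix.mulVecLin_apply,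
        LinearMap.smul_apply, LinearMap.id_apply, eigen_eq k r hk hr lam hroot' j hj0 hjk,
        sub_self]
    set W : Fin (k - 1) → LinearMap.ker T :=
      fun i => ⟨vvec k r lam ((i : ℕ) + 1), hmem _ (by omega) (by have := i.isLt; omega)⟩
      with hW
    have hli : LinearIndependent ℝ W := by
      apply LinearIndependent.of_comp (LinearMap.ker T).subtype
      rw [Fintype.linearIndependent_iff]
      intro g hg i
      have h2 := congrFun hg (depth1 k r ((i : ℕ) + 1) (by have := i.isLt; omega) hr)
      rw [Finset.sum_apply] at h2
      have h3 : ∀ i' : Fin (k - 1),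
          (g i' • ((LinearMap.ker T).subtype ∘ W) i') (depth1 k r ((i : ℕ) + 1)
            (by have := i.isLt; omega) hr) =
          (if i' = i then g i' * (-gfun k r lam 1) else 0) := by
        intro i'
        have : ((LinearMap.ker T).subtype ∘ W) i' = vvec k r lam ((i' : ℕ) + 1) := rfl
        rw [Pi.smul_apply, this, vvec_depth1 k r lam ((i' : ℕ) + 1) ((i : ℕ) + 1)
          (by have := i.isLt; omega) hr]
        by_cases he : i' = i
        · subst he
          rw [if_pos rfl, if_neg (by omega), if_pos rfl]
          simp
        · rw [if_neg he, if_neg (by omega), if_neg (by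
            intro hcontra
            exact he (Fin.ext (by omega)))]
          simp
      rw [Finset.sum_congr rfl (fun i' _ => h3 i')] at h2
      rw [Finset.sum_ite_eq' Finset.univ i (fun i' => g i' * (-gfun k r lam 1))] at h2
      rw [if_pos (Finset.mem_univ i)] at h2
      have h4 := gfun_one_ne k r hk lam
      rw [Pi.zero_apply] at h2
      rcases mul_eq_zero.mp h2 with h5 | h5
      · exact h5
      · exact absurd (neg_eq_zero.mp h5) h4
    have hcard := hli.fintype_card_le_finrank
    rw [Fintype.card_fin] at hcard
    exact hcard

/-- Let `k ≥ 3`, `r ≥ 1`. If `lam` is a root of `R^k_{r+1}`, then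
`lam` is an eigenvalue of the adjacency matrix of `\widehat{X_r^k}` and the
`lam`-eigenspace has dimension at least `k − 1`. -/
theorem hat_eigenspace_of_root_Rrplus1 (k r : ℕ) (hk : 3 ≤ k) (hr : 1 ≤ r) (lam : ℝ)
    (hroot : (Rpoly k (r + 1)).IsRoot lam) :
    IsAdjEigenvalue (hatB k) r lam ∧ k - 1 ≤ adjEigDim (hatB k) r lam := by
  exact hat_eigenspace_of_root_Rrplus1' k r hk hr lam hroot
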